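/- Let E be a δ-ring of subsets of a nonempty set X (a ring closed under countable intersections). If A ∈ σ(E) (the σ-algebra generated by E) and F ∈ E, then A ∩ F ∈ E. -/

import Mathlib

open MeasureTheory

/-- A δ-ring: a ring of sets that is moreover closed under countable intersections. -/
def IsDeltaRing {X : Type*} (E : Set (Set X)) : Prop :=
  IsSetRing E ∧ ∀ f : ℕ → Set X, (∀ n, f n ∈ E) → (⋂ n, f n) ∈ E

/-! Fix `F ∈ E`. The sets `A` with `A ∩ F ∈ E` contain `E` and form a σ-algebra: complements
because `Aᶜ ∩ F = F \ (A ∩ F)`, countable unions because a countable union of members of `E`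
lying inside `F` is `F \ ⋂ n, (F \ f n)`. Hence they contain `σ(E)`. -/

section

variable {X : Type*} {E : Set (Set X)} {F : Set X}

theorem MeasureTheory.IsSetRing.compl_inter_mem (hE : IsSetRing E) (hF : F ∈ E) {A : Set X}
    (hA : A ∩ F ∈ E) : Aᶜ ∩ F ∈ E := by
  rw [← Set.sdiff_eq_compl_inter, ← Set.sdiff_inter_self_eq_sdiff]
  exact hE.sdiff_mem hF hA

namespace IsDeltaRing

theorem iUnion_mem_of_subset (hE : IsDeltaRing E) (hF : F ∈ E) {f : ℕ → Set X}
    (hf : ∀ n, f n ∈ E) (hfF : ∀ n, f n ⊆ F) : ⋃ n, f n ∈ E := by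
  have hunion : ⋃ n, f n = F \ ⋂ n, F \ f n := by
    rw [Set.sdiff_iInter]
    exact Set.iUnion_congr fun n => (Set.sdiff_sdiff_cancel_left (hfF n)).symm
  rw [hunion]
  exact hE.1.sdiff_mem hF (hE.2 _ fun n => hE.1.sdiff_mem hF (hf n))

theorem iUnion_inter_mem (hE : IsDeltaRing E) (hF : F ∈ E) {f : ℕ → Set X}
    (hf : ∀ n, f n ∩ F ∈ E) : (⋃ n, f n) ∩ F ∈ E := by
  rw [Set.iUnion_inter]
  exact hE.iUnion_mem_of_subset hF hf fun n => Set.inter_subset_right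

end IsDeltaRing

end

theorem inter_mem_of_measurableSet_generateFrom_of_mem_deltaRing_general
    {X : Type*} (E : Set (Set X)) (hE : IsDeltaRing E)
    (A : Set X) (hA : MeasurableSet[MeasurableSpace.generateFrom E] A)
    (F : Set X) (hF : F ∈ E) : A ∩ F ∈ E := by
  induction A, hA using MeasurableSpace.generateFrom_induction with
  | hC A hA => exact hE.1.inter_mem hA hF
  | empty => simpa using hE.1.empty_mem
  | compl A _ hAF => exact hE.1.compl_inter_mem hF hAF
  | iUnion f _ hfF => exact hE.iUnion_inter_mem hF hfF

/-- If `E` is a δ-ring on a nonempty set `X`, `A ∈ σ(E)` and `F ∈ E`, then `A ∩ F ∈ E`. -/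
theorem inter_mem_of_measurableSet_generateFrom_of_mem_deltaRing
    {X : Type*} [Nonempty X] (E : Set (Set X)) (hE : IsDeltaRing E)
    (A : Set X) (hA : MeasurableSet[MeasurableSpace.generateFrom E] A)
    (F : Set X) (hF : F ∈ E) : A ∩ F ∈ E :=
  inter_mem_of_measurableSet_generateFrom_of_mem_deltaRing_general E hE A hA F hF
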